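/- arXiv:2305.04716 — 2 statements merged into one kernel-verified Lean document; each statement's English description precedes it below -/
import Mathlib

section
/- Fix n ≥ 1, masses m_1, …, m_n > 0 and strictly increasing jump times 0 < t_1 < t_2 < … < t_n. For q > 0 define the time-scaled walk Z^q(s) = Σ_{i=1}^n m_i·1[t_i/q ≤ s] − s, with left limits Z^q(t⁻) = Σ_i m_i·1[t_i/q < t] − t. Let 1 ≤ j ≤ k < n, set Ξ = m_j + m_{j+1} + … + m_k, and suppose there is T with 0 < T ≤ q such that t_{k+1} − t_j = Ξ · T. Then for any base length m_l > 0, the cumulative Poisson intensity (q − T) · m_l · Ξ equals q · m_l · ( Z^q((t_{k+1}/q)⁻) − Z^q((t_j/q)⁻) ); equivalently, Z^q((t_{k+1}/q)⁻) − Z^q((t_j/q)⁻) = Ξ · (1 − T/q). (This is Proposition 3.3 of the paper: on the event {T_{l;j−k} ≤ q}, the cumulative arrival rate to the Poisson process ζ^{l;j−k} up to time q equals the area of the parallelogram region of the excursion mosaic matched to it — base m_l times height Z^q((t_{k+1}/q)⁻) − Z^q((t_j/q)⁻) — multiplied by q.) -/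
/-!
Since `t` is strictly increasing, the walk's left limit at the jump time `t_x / q` has collected
exactly the masses `m_i` with `i < x`. The height of the parallelogram is therefore the mass
`Ξ = m_j + ⋯ + m_k` of the merged excursion minus the drift `(t_{k+1} - t_j) / q = Ξ T / q`.
-/

open Finset

theorem Finset.sum_Iio_sub_sum_Iio {α M : Type*} [LinearOrder α] [LocallyFiniteOrder α]
    [LocallyFiniteOrderBot α] [AddCommGroup M] (f : α → M) {a b : α} (hab : a ≤ b) :
    ∑ i ∈ Iio b, f i - ∑ i ∈ Iio a, f i = ∑ i ∈ Ico a b, f i := by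
  have hdiff : Iio b \ Iio a = Ico a b := by
    ext i
    simp only [mem_sdiff, mem_Iio, mem_Ico, not_lt, and_comm]
  rw [← hdiff, sum_sdiff_eq_sub (Iio_subset_Iio hab)]

theorem Fin.Ico_eq_Icc_of_val_eq_succ {n : ℕ} {a b c : Fin n} (hc : (c : ℕ) = b + 1) :
    Ico a c = Icc a b := by
  ext i
  simp only [mem_Ico, mem_Icc, Fin.le_iff_val_le_val, Fin.lt_def]
  omega

theorem StrictMono.sum_ite_lt_eq_sum_Iio {ι β M : Type*} [Fintype ι] [LinearOrder ι]
    [LocallyFiniteOrderBot ι] [Preorder β] [DecidableLT β] [AddCommMonoid M] {t : ι → β}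
    (ht : StrictMono t) (m : ι → M) (x : ι) :
    ∑ i, (if t i < t x then m i else 0) = ∑ i ∈ Iio x, m i := by
  rw [← sum_filter]
  congr 1
  ext i
  simp only [mem_filter, mem_univ, true_and, mem_Iio, ht.lt_iff_lt]

theorem cumulative_rate_eq_area_of_parallelogram_general
    (n : ℕ) (m : Fin n → ℝ)
    (t : Fin n → ℝ) (htmono : StrictMono t)
    (q : ℝ) (hq : 0 < q)
    (Zqleft : ℝ → ℝ)
    (hZqleft : ∀ s, Zqleft s = (∑ i, if t i / q < s then m i else 0) - s)
    (j k : Fin n) (hjk : j ≤ k) (hk : (k : ℕ) + 1 < n)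
    (Ξ : ℝ) (hΞ : Ξ = ∑ i ∈ Finset.Icc j k, m i)
    (T : ℝ)
    (hmerge : t ⟨(k : ℕ) + 1, hk⟩ - t j = Ξ * T)
    (ml : ℝ) :
    (q - T) * ml * Ξ
        = q * ml * (Zqleft (t ⟨(k : ℕ) + 1, hk⟩ / q) - Zqleft (t j / q)) ∧
      Zqleft (t ⟨(k : ℕ) + 1, hk⟩ / q) - Zqleft (t j / q) = Ξ * (1 - T / q) := by
  set k' : Fin n := ⟨(k : ℕ) + 1, hk⟩
  have hjk' : j ≤ k' := hjk.trans (Fin.le_iff_val_le_val.mpr (Nat.le_succ _))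
  have hscaled : StrictMono (fun i ↦ t i / q) := htmono.div_const hq
  have height : Zqleft (t k' / q) - Zqleft (t j / q) = Ξ * (1 - T / q) := by
    calc Zqleft (t k' / q) - Zqleft (t j / q)
        = (∑ i ∈ Iio k', m i - ∑ i ∈ Iio j, m i) - (t k' - t j) / q := by
          rw [hZqleft, hZqleft, hscaled.sum_ite_lt_eq_sum_Iio, hscaled.sum_ite_lt_eq_sum_Iio]
          ring
      _ = Ξ * (1 - T / q) := by
          rw [sum_Iio_sub_sum_Iio m hjk', Fin.Ico_eq_Icc_of_val_eq_succ rfl, ← hΞ, hmerge]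
          ring
  refine ⟨?_, height⟩
  rw [height]
  field_simp

/-- Proposition 3.3 of the paper: the cumulative arrival rate `(q - T) * m_l * Ξ` of the
Poisson process `ζ^{l;j-k}` up to time `q` equals `q` times the area of the matched
parallelogram of the excursion mosaic, whose base is `m_l` and whose height is
`Z^q((t_{k+1}/q)⁻) − Z^q((t_j/q)⁻)`; equivalently this height equals `Ξ (1 − T/q)`. -/
theorem cumulative_rate_eq_area_of_parallelogram
    (n : ℕ) (hn : 1 ≤ n) (m : Fin n → ℝ) (hm : ∀ i, 0 < m i)
    (t : Fin n → ℝ) (ht0 : ∀ i, 0 < t i) (htmono : StrictMono t)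
    (q : ℝ) (hq : 0 < q)
    (Zqleft : ℝ → ℝ)
    (hZqleft : ∀ s, Zqleft s = (∑ i, if t i / q < s then m i else 0) - s)
    (j k : Fin n) (hjk : j ≤ k) (hk : (k : ℕ) + 1 < n)
    (Ξ : ℝ) (hΞ : Ξ = ∑ i ∈ Finset.Icc j k, m i)
    (T : ℝ) (hT0 : 0 < T) (hTq : T ≤ q)
    (hmerge : t ⟨(k : ℕ) + 1, hk⟩ - t j = Ξ * T)
    (ml : ℝ) (hml : 0 < ml) :
    (q - T) * ml * Ξ
        = q * ml * (Zqleft (t ⟨(k : ℕ) + 1, hk⟩ / q) - Zqleft (t j / q)) ∧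
      Zqleft (t ⟨(k : ℕ) + 1, hk⟩ / q) - Zqleft (t j / q) = Ξ * (1 - T / q) :=
  cumulative_rate_eq_area_of_parallelogram_general n m t htmono q hq Zqleft hZqleft j k hjk hk Ξ hΞ
    T hmerge ml
end

section
/- Fix n ≥ 1, masses m_1, …, m_n > 0 and strictly increasing jump times 0 < t_1 < t_2 < … < t_n, and define Z(s) = Σ_{i=1}^n m_i·1[t_i ≤ s] − s for s ≥ 0, with left limits Z(t⁻) = Σ_{i=1}^n m_i·1[t_i < t] − t, and the reflected walk B(s) = Z(s) − inf_{0 ≤ u ≤ s} Z(u). Suppose a = t_j for some j, b > a, and [a, b] is an excursion interval of B above 0, in the sense that inf_{0 ≤ u ≤ s} Z(u) = Z(a⁻) for all s ∈ [a, b], B(s) > 0 for all s ∈ [a, b), and B(b) = 0. Then the area under the excursion satisfies ∫_a^b B(s) ds = Σ_{i : a ≤ t_i ≤ b} ( m_i·(Z(t_i⁻) − Z(a⁻)) + m_i²/2 ). (This is the slice decomposition underlying Corollary 3.4 of the paper: the region under an excursion of B is the union of the vertex slices — for each carried vertex, a right isosceles triangle of area m_i²/2 together with parallelograms of total area m_i·B(t_i⁻)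 — whose pairwise intersections have zero Lebesgue measure; consequently the cumulative rate of surplus edges in the corresponding connected component of the multigraph equals q times the area under the excursion.) -/
/-!
On an excursion interval `[a, b]` the running infimum is frozen at `Z(a⁻)`, so there
`B(s) = ∑_{a ≤ tᵢ ≤ s} mᵢ - (s - a)`, and `B(b) = 0` says that the carried mass `M = ∑ mᵢ`
equals `b - a`. Integrating the steps gives `∫ B = ∑ mᵢ (b - tᵢ) - (b - a)² / 2`, while
`Z(tᵢ⁻) - Z(a⁻) = ∑_{k < i} mₖ - (tᵢ - a)`, so the slice areas add up to
`∑_{k < i} mᵢ mₖ + ∑ mᵢ² / 2 - ∑ mᵢ (tᵢ - a) = M² / 2 - ∑ mᵢ (tᵢ - a)`.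
Both agree because `M = b - a`.
-/

open Finset MeasureTheory

theorem sum_ite_sub_sum_ite_lt_eq_sum_filter_Icc {ι : Type*} [Fintype ι] (m t : ι → ℝ) {a b : ℝ}
    (p : ℝ → Prop) [DecidablePred p] (hlt : ∀ x < a, p x) (hgt : ∀ x, b < x → ¬ p x) :
    (∑ i, if p (t i) then m i else 0) - (∑ i, if t i < a then m i else 0)
      = ∑ i ∈ univ.filter (fun i => a ≤ t i ∧ t i ≤ b), if p (t i) then m i else 0 := by
  rw [sub_eq_iff_eq_add', sum_filter, ← sum_add_distrib]
  refine sum_congr rfl fun i _ => ?_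
  rcases lt_or_ge (t i) a with hia | hai
  · simp [hia, hlt _ hia, hia.not_ge]
  rcases le_or_gt (t i) b with hib | hbi
  · simp [hai, hib, hai.not_gt]
  · simp [hgt _ hbi, hai.not_gt, hbi.not_ge]

theorem two_mul_sum_mul_sum_lt_add_sum_sq {ι R : Type*} [LinearOrder ι] [CommSemiring R]
    (s : Finset ι) (f : ι → R) :
    2 * ∑ i ∈ s, f i * ∑ k ∈ s with k < i, f k + ∑ i ∈ s, f i ^ 2 = (∑ i ∈ s, f i) ^ 2 := by
  induction s using Finset.induction_on_max with
  | empty => simp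
  | insert a s hlt ih =>
    have ha : a ∉ s := fun h => (hlt a h).false
    have hbelow_a : (insert a s).filter (· < a) = s := by
      rw [filter_insert, if_neg (lt_irrefl a), filter_true_of_mem hlt]
    have hbelow : ∑ i ∈ s, f i * ∑ k ∈ insert a s with k < i, f k
        = ∑ i ∈ s, f i * ∑ k ∈ s with k < i, f k :=
      sum_congr rfl fun i hi => by rw [filter_insert, if_neg (hlt i hi).asymm]
    rw [sum_insert ha, sum_insert ha, sum_insert ha, hbelow_a, hbelow, add_sq, ← ih]
    ring

theorem intervalIntegrable_ite_le (c k a b : ℝ) :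
    IntervalIntegrable (fun s => if c ≤ s then k else 0) volume a b := by
  have hind : (fun s => if c ≤ s then k else 0) = (Set.Ici c).indicator fun _ => k := by
    ext s
    simp [Set.indicator_apply]
  rw [hind]
  exact ⟨intervalIntegrable_const.1.indicator measurableSet_Ici,
    intervalIntegrable_const.2.indicator measurableSet_Ici⟩

theorem integral_ite_le (c k : ℝ) {a b : ℝ} (hac : a ≤ c) (hcb : c ≤ b) :
    ∫ s in a..b, (if c ≤ s then k else 0) = k * (b - c) := by
  have hbefore : ∫ s in a..c, (if c ≤ s then k else 0) = 0 := by
    rw [intervalIntegral.integral_congr_Ioo_of_le hac (g := fun _ => 0)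
      fun s hs => if_neg hs.2.not_ge]
    simp
  have hafter : ∫ s in c..b, (if c ≤ s then k else 0) = k * (b - c) := by
    rw [intervalIntegral.integral_congr (g := fun _ => k)
      fun s hs => if_pos (Set.uIcc_of_le hcb ▸ hs).1]
    simp [mul_comm]
  rw [← intervalIntegral.integral_add_adjacent_intervals (intervalIntegrable_ite_le c k a c)
    (intervalIntegrable_ite_le c k c b), hbefore, hafter, zero_add]

theorem integral_sum_ite_le_sub {ι : Type*} (S : Finset ι) (m t : ι → ℝ) {a b : ℝ}
    (hS : ∀ i ∈ S, t i ∈ Set.Icc a b) :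
    ∫ s in a..b, ((∑ i ∈ S, if t i ≤ s then m i else 0) - (s - a))
      = ∑ i ∈ S, m i * (b - t i) - (b - a) ^ 2 / 2 := by
  have hsteps : IntervalIntegrable (fun s => ∑ i ∈ S, if t i ≤ s then m i else 0) volume a b := by
    simpa only [← sum_fn] using
      IntervalIntegrable.sum S fun i _ => intervalIntegrable_ite_le (t i) (m i) a b
  rw [intervalIntegral.integral_sub hsteps
      ((by fun_prop : Continuous fun s : ℝ => s - a).intervalIntegrable a b),
    intervalIntegral.integral_finsetSum fun i _ => intervalIntegrable_ite_le (t i) (m i) a b,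
    sum_congr rfl fun i hi => integral_ite_le (t i) (m i) (hS i hi).1 (hS i hi).2,
    intervalIntegral.integral_comp_sub_right fun s => s]
  simp only [sub_self, integral_id]
  ring

theorem area_under_excursion_eq_sum_of_slices_general
    (n : ℕ) (m : Fin n → ℝ)
    (t : Fin n → ℝ) (htmono : StrictMono t)
    (Z Zleft B : ℝ → ℝ)
    (hZ : ∀ s, Z s = (∑ i, if t i ≤ s then m i else 0) - s)
    (hZleft : ∀ s, Zleft s = (∑ i, if t i < s then m i else 0) - s)
    (hB : ∀ s, B s = Z s - sInf (Z '' Set.Icc 0 s))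
    (a b : ℝ) (hab : a < b)
    (hinf : ∀ s ∈ Set.Icc a b, sInf (Z '' Set.Icc 0 s) = Zleft a)
    (hBb : B b = 0) :
    ∫ s in a..b, B s
      = ∑ i ∈ Finset.univ.filter (fun i => a ≤ t i ∧ t i ≤ b),
          (m i * (Zleft (t i) - Zleft a) + m i ^ 2 / 2) := by
  set S := Finset.univ.filter (fun i => a ≤ t i ∧ t i ≤ b)
  have hS : ∀ i ∈ S, t i ∈ Set.Icc a b := fun i hi => (mem_filter.mp hi).2
  have hprofile : ∀ s ∈ Set.Icc a b,
      B s = (∑ i ∈ S, if t i ≤ s then m i else 0) - (s - a) := fun s hs => by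
    rw [hB, hinf s hs, hZ, hZleft, ← sum_ite_sub_sum_ite_lt_eq_sum_filter_Icc m t (· ≤ s)
      (fun x hx => hx.le.trans hs.1) (fun x hx => (hs.2.trans_lt hx).not_ge)]
    ring
  have hslice : ∀ i ∈ S,
      Zleft (t i) - Zleft a = (∑ k ∈ S with k < i, m k) - (t i - a) := fun i hi => by
    simp only [sum_filter, ← htmono.lt_iff_lt]
    rw [hZleft, hZleft, ← sum_ite_sub_sum_ite_lt_eq_sum_filter_Icc m t (· < t i)
      (fun x hx => hx.trans_le (hS i hi).1) (fun x hx => ((hS i hi).2.trans_lt hx).asymm)]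
    ring
  have hmass : ∑ i ∈ S, m i = b - a := by
    have h := hprofile b ⟨hab.le, le_rfl⟩
    rw [hBb, sum_congr rfl fun i hi => if_pos (hS i hi).2] at h
    linarith
  have hpairs := two_mul_sum_mul_sum_lt_add_sum_sq S m
  rw [hmass] at hpairs
  rw [intervalIntegral.integral_congr fun s hs => hprofile s (Set.uIcc_of_le hab.le ▸ hs),
    integral_sum_ite_le_sub S m t hS,
    sum_congr rfl fun i hi => congrArg (m i * · + m i ^ 2 / 2) (hslice i hi)]
  simp only [mul_sub, sum_add_distrib, sum_sub_distrib, ← sum_div, ← sum_mul, hmass]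
  linear_combination -hpairs / 2

/-- Slice decomposition of the area under an excursion of the reflected breadth-first
walk: the area under the excursion on `[a, b]` equals the sum, over the vertices `i`
carried by the excursion (those with `a ≤ t i ≤ b`), of the slice areas
`m i * (Z(t i⁻) − Z(a⁻)) + m i ^ 2 / 2`. -/
theorem area_under_excursion_eq_sum_of_slices
    (n : ℕ) (hn : 1 ≤ n) (m : Fin n → ℝ) (hm : ∀ i, 0 < m i)
    (t : Fin n → ℝ) (ht0 : ∀ i, 0 < t i) (htmono : StrictMono t)
    (Z Zleft B : ℝ → ℝ)
    (hZ : ∀ s, Z s = (∑ i, if t i ≤ s then m i else 0) - s)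
    (hZleft : ∀ s, Zleft s = (∑ i, if t i < s then m i else 0) - s)
    (hB : ∀ s, B s = Z s - sInf (Z '' Set.Icc 0 s))
    (j : Fin n) (a b : ℝ) (ha : a = t j) (hab : a < b)
    (hinf : ∀ s ∈ Set.Icc a b, sInf (Z '' Set.Icc 0 s) = Zleft a)
    (hpos : ∀ s ∈ Set.Ico a b, 0 < B s) (hBb : B b = 0) :
    ∫ s in a..b, B s
      = ∑ i ∈ Finset.univ.filter (fun i => a ≤ t i ∧ t i ≤ b),
          (m i * (Zleft (t i) - Zleft a) + m i ^ 2 / 2) :=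
  area_under_excursion_eq_sum_of_slices_general n m t htmono Z Zleft B hZ hZleft hB a b hab hinf hBb
end
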